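/- arXiv:1801.05768 — 2 statements merged into one kernel-verified Lean document; each statement's English description precedes it below -/
import Mathlib

section
/- Let K be a natural number divisible by 4, and for s ∈ ZMod K and t ∈ ℕ let Arc(s, t) = {s, s+1, …, s+t−1} ⊆ ZMod K. Let S₁ = Arc(a, K/2) and S₂ = Arc(b, K/2) satisfy |S₁ ∩ S₂| = K/4. Then each of the four regions S₁ ∩ S₂, S₁ \ S₂, S₂ \ S₁, and (S₁ ∪ S₂)ᶜ has cardinality exactly K/4, and each is itself a cyclic interval of the form Arc(s, K/4) for some s ∈ ZMod K. -/
/-- The cyclic interval `{s, s+1, …, s+t-1}` in `ZMod K`. -/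
def arc (K : ℕ) (s : ZMod K) (t : ℕ) : Finset (ZMod K) :=
  (Finset.range t).image (fun i : ℕ => (s + (i : ZMod K)))

lemma mem_arc {K : ℕ} [NeZero K] {s x : ZMod K} {t : ℕ} (ht : t ≤ K) :
    x ∈ arc K s t ↔ (x - s).val < t := by
  constructor
  · intro hx
    simp only [arc, Finset.mem_image, Finset.mem_range] at hx
    obtain ⟨i, hi, rfl⟩ := hx
    rw [add_sub_cancel_left, ZMod.val_natCast_of_lt (lt_of_lt_of_le hi ht)]
    exact hi
  · intro h
    simp only [arc, Finset.mem_image, Finset.mem_range]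
    exact ⟨(x - s).val, h, by rw [ZMod.natCast_val, ZMod.cast_id]; ring⟩

lemma card_arc {K : ℕ} [NeZero K] (s : ZMod K) {t : ℕ} (ht : t ≤ K) :
    (arc K s t).card = t := by
  rw [arc, Finset.card_image_of_injOn, Finset.card_range]
  intro i hi j hj hij
  simp only [Finset.coe_range, Set.mem_Iio] at hi hj
  have h1 : ((i : ZMod K)) = (j : ZMod K) := add_left_cancel hij
  have h2 := congrArg ZMod.val h1
  rwa [ZMod.val_natCast_of_lt (lt_of_lt_of_le hi ht),
    ZMod.val_natCast_of_lt (lt_of_lt_of_le hj ht)] at h2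

lemma val_sub_natCast {K : ℕ} [NeZero K] (y : ZMod K) {c : ℕ} (hc : c < K) :
    (y - (c : ZMod K)).val = if c ≤ y.val then y.val - c else y.val + K - c := by
  have hyK := ZMod.val_lt y
  have hy : ((y.val : ℕ) : ZMod K) = y := by rw [ZMod.natCast_val, ZMod.cast_id]
  split_ifs with h
  · have e : y - (c : ZMod K) = ((y.val - c : ℕ) : ZMod K) := by
      rw [Nat.cast_sub h, hy]
    rw [e, ZMod.val_natCast_of_lt (by omega)]
  · have e : y - (c : ZMod K) = ((y.val + K - c : ℕ) : ZMod K) := by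
      rw [Nat.cast_sub (by omega), Nat.cast_add, hy, ZMod.natCast_self, add_zero]
    rw [e, ZMod.val_natCast_of_lt (by omega)]

lemma inter_arcs {K m : ℕ} [NeZero K] (hm : 0 < m) (hK : K = 4 * m) (a : ZMod K)
    {d : ℕ} (hd : d < K) :
    arc K a (2 * m) ∩ arc K (a + (d : ZMod K)) (2 * m)
      = if d ≤ 2 * m then arc K (a + (d : ZMod K)) (2 * m - d) else arc K a (d - 2 * m) := by
  split_ifs with hcase <;>
  · ext x
    have hv := ZMod.val_lt (x - a)
    have e : x - (a + (d : ZMod K)) = (x - a) - (d : ZMod K) := by ring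
    simp only [Finset.mem_inter, mem_arc (show 2 * m ≤ K by omega),
      mem_arc (show 2 * m - d ≤ K by omega), mem_arc (show d - 2 * m ≤ K by omega),
      e, val_sub_natCast (x - a) hd]
    split_ifs <;> omega

lemma quarter_core {K m : ℕ} [NeZero K] (hm : 0 < m) (hK : K = 4 * m) (a : ZMod K) :
    arc K a (2 * m) ∩ arc K (a + ((m : ℕ) : ZMod K)) (2 * m)
        = arc K (a + ((m : ℕ) : ZMod K)) m ∧
    arc K a (2 * m) \ arc K (a + ((m : ℕ) : ZMod K)) (2 * m) = arc K a m ∧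
    arc K (a + ((m : ℕ) : ZMod K)) (2 * m) \ arc K a (2 * m)
        = arc K (a + ((2 * m : ℕ) : ZMod K)) m ∧
    (arc K a (2 * m) ∪ arc K (a + ((m : ℕ) : ZMod K)) (2 * m))ᶜ
        = arc K (a + ((3 * m : ℕ) : ZMod K)) m := by
  have hmK : m < K := by omega
  have h2mK : 2 * m < K := by omega
  have h3mK : 3 * m < K := by omega
  refine ⟨?_, ?_, ?_, ?_⟩ <;>
  · ext x
    have hv := ZMod.val_lt (x - a)
    have e1 : x - (a + ((m : ℕ) : ZMod K)) = (x - a) - ((m : ℕ) : ZMod K) := by ring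
    have e2 : x - (a + ((2 * m : ℕ) : ZMod K)) = (x - a) - ((2 * m : ℕ) : ZMod K) := by ring
    have e3 : x - (a + ((3 * m : ℕ) : ZMod K)) = (x - a) - ((3 * m : ℕ) : ZMod K) := by ring
    simp only [Finset.mem_inter, Finset.mem_sdiff, Finset.mem_compl, Finset.mem_union, not_or,
      mem_arc (show 2 * m ≤ K by omega), mem_arc (show m ≤ K by omega),
      e1, e2, e3, val_sub_natCast (x - a) hmK, val_sub_natCast (x - a) h2mK,
      val_sub_natCast (x - a) h3mK]
    split_ifs <;> omega

/-- **Four contiguous quarter-arcs.** Let `4 ∣ K` and let `S₁ = Arc(a, K/2)`,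
`S₂ = Arc(b, K/2)` be semicircles in `ZMod K` with `|S₁ ∩ S₂| = K/4`. Then each of the four
regions `S₁ ∩ S₂`, `S₁ \ S₂`, `S₂ \ S₁`, `(S₁ ∪ S₂)ᶜ` has cardinality exactly `K/4` and is
itself a cyclic interval `Arc(s, K/4)` for some `s`. -/
theorem four_quarter_arcs (K : ℕ) [NeZero K] (hK : 4 ∣ K) (a b : ZMod K)
    (hab : ((arc K a (K / 2)) ∩ (arc K b (K / 2))).card = K / 4) :
    ((arc K a (K / 2) ∩ arc K b (K / 2)).card = K / 4 ∧
        ∃ s, arc K a (K / 2) ∩ arc K b (K / 2) = arc K s (K / 4)) ∧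
      ((arc K a (K / 2) \ arc K b (K / 2)).card = K / 4 ∧
        ∃ s, arc K a (K / 2) \ arc K b (K / 2) = arc K s (K / 4)) ∧
      ((arc K b (K / 2) \ arc K a (K / 2)).card = K / 4 ∧
        ∃ s, arc K b (K / 2) \ arc K a (K / 2) = arc K s (K / 4)) ∧
      (((arc K a (K / 2) ∪ arc K b (K / 2))ᶜ).card = K / 4 ∧
        ∃ s, (arc K a (K / 2) ∪ arc K b (K / 2))ᶜ = arc K s (K / 4)) := by
  obtain ⟨m, hKm⟩ : ∃ m, K = 4 * m := hK
  have hK0 : K ≠ 0 := NeZero.ne K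
  have hm : 0 < m := by omega
  have h2 : K / 2 = 2 * m := by omega
  have h4 : K / 4 = m := by omega
  rw [h2, h4] at hab ⊢
  have hmK : m ≤ K := by omega
  obtain ⟨d, hdK, hb⟩ : ∃ d : ℕ, d < K ∧ b = a + (d : ZMod K) :=
    ⟨(b - a).val, ZMod.val_lt _, by rw [ZMod.natCast_val, ZMod.cast_id]; ring⟩
  subst hb
  rw [inter_arcs hm hKm a hdK] at hab
  by_cases hcase : d ≤ 2 * m
  · rw [if_pos hcase, card_arc _ (by omega)] at hab
    have hd : d = m := by omega
    subst d
    obtain ⟨c1, c2, c3, c4⟩ := quarter_core hm hKm a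
    refine ⟨⟨?_, a + ((m : ℕ) : ZMod K), c1⟩, ⟨?_, a, c2⟩,
      ⟨?_, a + ((2 * m : ℕ) : ZMod K), c3⟩, ⟨?_, a + ((3 * m : ℕ) : ZMod K), c4⟩⟩ <;>
      simp [c1, c2, c3, c4, card_arc _ hmK]
  · rw [if_neg hcase, card_arc _ (by omega)] at hab
    have hd : d = 3 * m := by omega
    subst d
    set b' := a + ((3 * m : ℕ) : ZMod K) with hb'
    have ha : b' + ((m : ℕ) : ZMod K) = a := by
      rw [hb']
      have h4m : ((4 * m : ℕ) : ZMod K) = 0 := by rw [← hKm]; exact ZMod.natCast_self K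
      have : ((3 * m : ℕ) : ZMod K) + ((m : ℕ) : ZMod K) = ((4 * m : ℕ) : ZMod K) := by
        push_cast; ring
      rw [add_assoc, this, h4m, add_zero]
    obtain ⟨c1, c2, c3, c4⟩ := quarter_core hm hKm b'
    rw [ha] at c1 c2 c3 c4
    rw [Finset.inter_comm (arc K a (2 * m)), Finset.union_comm (arc K a (2 * m))]
    refine ⟨⟨?_, a, c1⟩, ⟨?_, b' + ((2 * m : ℕ) : ZMod K), c3⟩,
      ⟨?_, b', c2⟩, ⟨?_, b' + ((3 * m : ℕ) : ZMod K), c4⟩⟩ <;>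
      simp [c1, c2, c3, c4, card_arc _ hmK]
end

section
/- Let Δ be a uniformly distributed random variable on Fin K and, for j ∈ {1,…,l+1} with l + 1 ≤ K, let W_j^{(K)} = 1 if Δ = j and W_j^{(K)} = 0 otherwise. Then for every fixed l ∈ ℕ, lim_{K→∞} I(W_{l+1}^{(K)}; (W_1^{(K)}, …, W_l^{(K)})) / H2(1/K) = 0, where the limit is over natural numbers K → ∞. -/
open MeasureTheory Real Filter

/-- Shannon entropy (in nats) of a random variable `X` with values in a finite type:
`H(X) = ∑ₓ negMulLog (P(X = x))`. -/
noncomputable def entropy {Ω : Type*} [MeasurableSpace Ω] (P : Measure Ω)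
    {α : Type*} [Fintype α] (X : Ω → α) : ℝ :=
  ∑ x : α, Real.negMulLog (P (X ⁻¹' {x})).toReal

/-- Mutual information `I(X ; Y) = H(X) + H(Y) - H((X,Y))`. -/
noncomputable def mutualInfo {Ω : Type*} [MeasurableSpace Ω] (P : Measure Ω)
    {α β : Type*} [Fintype α] [Fintype β] (X : Ω → α) (Y : Ω → β) : ℝ :=
  entropy P X + entropy P Y - entropy P (fun ω => (X ω, Y ω))

/-!
Every random variable in sight is a function of `Δ`, so its entropy is `∑ η(#fibre / K)` with
`η = negMulLog`. The vector `(W₁, …, W_l)` is an injective image of `min Δ l`, whose fibres are `l`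
singletons and one block of size `K - l`; likewise `(W_{l+1}, W₁, …, W_l)` is an injective image of
`min Δ (l + 1)`. Hence the `η(1/K)` terms cancel and
`I = η(1 - 1/K) + η(1 - l/K) - η(1 - (l+1)/K)`. From `y - y² ≤ η(1 - y) ≤ y` this is at most
`((l+1)/K)²` in absolute value, whereas concavity of `H₂` gives `H₂(1/K) ≥ 2 log 2 / K`.
-/

open scoped ENNReal Finset

lemma entropy_comp_injective {Ω α β : Type*} [MeasurableSpace Ω] (P : Measure Ω)
    [Fintype α] [Fintype β] (Z : Ω → α) {ψ : α → β} (hψ : Function.Injective ψ) :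
    entropy P (fun ω => ψ (Z ω)) = entropy P Z := by
  refine (Fintype.sum_of_injective ψ hψ _ _ ?_ fun x => ?_).symm
  · intro y hy
    have : (fun ω => ψ (Z ω)) ⁻¹' {y} = ∅ := by
      ext ω; simpa using fun h => hy ⟨Z ω, h⟩
    simp [this]
  · have : (fun ω => ψ (Z ω)) ⁻¹' {ψ x} = Z ⁻¹' {x} := by ext; simp [hψ.eq_iff]
    rw [this]

section Uniform

variable {Ω α : Type*} [MeasurableSpace Ω] {P : Measure Ω} [IsProbabilityMeasure P] [Fintype α]
  {Δ : Ω → α}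

lemma measure_preimage_finset_of_uniform
    (hunif : ∀ x, P (Δ ⁻¹' {x}) = (Fintype.card α : ℝ≥0∞)⁻¹) (S : Finset α) :
    P (Δ ⁻¹' S) = #S / Fintype.card α := by
  classical
  have : Nonempty α := (nonempty_of_isProbabilityMeasure P).map Δ
  have hcard : (Fintype.card α : ℝ≥0∞) ≠ 0 := by simp
  have le_card_div (T : Finset α) : P (Δ ⁻¹' T) ≤ #T / Fintype.card α := by
    calc P (Δ ⁻¹' T) = P (⋃ i ∈ T, Δ ⁻¹' {i}) := by simp
      _ ≤ ∑ i ∈ T, P (Δ ⁻¹' {i}) := measure_biUnion_finset_le T _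
      _ = #T / Fintype.card α := by simp [hunif, div_eq_mul_inv]
  have card_div_add : (#S / Fintype.card α + #Sᶜ / Fintype.card α : ℝ≥0∞) = 1 := by
    rw [ENNReal.div_add_div_same, ← Nat.cast_add, Finset.card_add_card_compl,
      ENNReal.div_self hcard (ENNReal.natCast_ne_top _)]
  -- The fibres of `Δ` need not be measurable, so the lower bound comes from the complement.
  have one_le : 1 ≤ P (Δ ⁻¹' S) + #Sᶜ / Fintype.card α :=
    calc 1 = P (Δ ⁻¹' S ∪ Δ ⁻¹' ↑Sᶜ) := by simp
      _ ≤ P (Δ ⁻¹' S) + P (Δ ⁻¹' ↑Sᶜ) := measure_union_le _ _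
      _ ≤ P (Δ ⁻¹' S) + #Sᶜ / Fintype.card α := by gcongr; exact le_card_div Sᶜ
  refine le_antisymm (le_card_div S) ?_
  rw [← card_div_add] at one_le
  exact ENNReal.le_of_add_le_add_right
    (ENNReal.div_ne_top (ENNReal.natCast_ne_top _) hcard) one_le

lemma entropy_comp_of_uniform
    (hunif : ∀ x, P (Δ ⁻¹' {x}) = (Fintype.card α : ℝ≥0∞)⁻¹)
    {β : Type*} [Fintype β] [DecidableEq β] (f : α → β) :
    entropy P (fun ω => f (Δ ω)) = ∑ y, negMulLog (#{x | f x = y} / Fintype.card α) := by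
  refine Finset.sum_congr rfl fun y _ => ?_
  have : (fun ω => f (Δ ω)) ⁻¹' {y} = Δ ⁻¹' ↑({x | f x = y} : Finset α) := by ext; simp
  rw [this, measure_preimage_finset_of_uniform hunif, ENNReal.toReal_div]
  simp

lemma entropy_indicator_of_uniform
    (hunif : ∀ x, P (Δ ⁻¹' {x}) = (Fintype.card α : ℝ≥0∞)⁻¹) (p : α → Prop) [DecidablePred p] :
    entropy P (fun ω => if p (Δ ω) then (1 : Fin 2) else 0) =
      negMulLog (#{x | p x} / Fintype.card α) + negMulLog (1 - #{x | p x} / Fintype.card α) := by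
  have : Nonempty α := (nonempty_of_isProbabilityMeasure P).map Δ
  have hcard : (Fintype.card α : ℝ) ≠ 0 := by simp
  rw [entropy_comp_of_uniform hunif fun x => if p x then 1 else 0, Fin.sum_univ_two, add_comm]
  have card_not : (#{x | ¬p x} : ℝ) = Fintype.card α - #{x | p x} := by
    rw [eq_sub_iff_add_eq, ← Nat.cast_add, add_comm, Finset.card_filter_add_card_filter_not,
      Finset.card_univ]
  simp [apply_ite (· = (0 : Fin 2)), apply_ite (· = (1 : Fin 2)), card_not, sub_div, hcard]

end Uniform

lemma Fin.card_filter_val_eq {K n : ℕ} (h : n < K) : #{i : Fin K | (i : ℕ) = n} = 1 :=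
  Finset.card_eq_one.2 ⟨⟨n, h⟩, by ext; simp [Fin.ext_iff]⟩

lemma injective_indicatorVec (l : ℕ) :
    Function.Injective fun (t : Fin (l + 1)) (j : Fin l) =>
      if (t : ℕ) = j then (1 : Fin 2) else 0 := by
  intro s t h
  by_contra hst
  wlog hs : (s : ℕ) < l generalizing s t
  · exact this h.symm (Ne.symm hst) (by omega)
  exact hst (Fin.ext (by simpa [eq_comm] using congrFun h ⟨s, hs⟩))

lemma injective_indicator_prod_indicatorVec (l : ℕ) :
    Function.Injective fun t : Fin (l + 2) =>
      ((if (t : ℕ) = l then (1 : Fin 2) else 0),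
        fun j : Fin l => if (t : ℕ) = j then (1 : Fin 2) else 0) := by
  intro s t h
  by_contra hst
  wlog hs : (s : ℕ) ≤ l generalizing s t
  · exact this h.symm (Ne.symm hst) (by omega)
  apply hst
  ext
  rcases hs.lt_or_eq with hs | hs
  · simpa [eq_comm] using congrFun (congrArg Prod.snd h) ⟨s, hs⟩
  · simpa [hs, eq_comm] using congrArg Prod.fst h

section FinUniform

variable {Ω : Type*} [MeasurableSpace Ω] {P : Measure Ω} [IsProbabilityMeasure P] {K : ℕ}
  {Δ : Ω → Fin K}

lemma entropy_clamp_of_uniform {m : ℕ} (hm : m ≤ K)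
    (hunif : ∀ x, P (Δ ⁻¹' {x}) = (K : ℝ≥0∞)⁻¹) :
    entropy P (fun ω => Fin.clamp (Δ ω) m) = m * negMulLog (1 / K) + negMulLog (1 - m / K) := by
  have hK : (K : ℝ) ≠ 0 := by
    have : Nonempty (Fin K) := (nonempty_of_isProbabilityMeasure P).map Δ
    exact Nat.cast_ne_zero.2 (Fin.pos_iff_nonempty.2 this).ne'
  rw [entropy_comp_of_uniform (by simpa using hunif) fun i : Fin K => Fin.clamp i m,
    Fin.sum_univ_castSucc]
  have fiber_castSucc (t : Fin m) : #{i : Fin K | Fin.clamp i m = t.castSucc} = 1 := by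
    refine Eq.trans ?_ (Fin.card_filter_val_eq (t.isLt.trans_le hm))
    congr 1; ext i; simp [Fin.ext_iff, Fin.clamp]; omega
  have fiber_last : #{i : Fin K | Fin.clamp i m = Fin.last m} = K - m := by
    have split := Finset.card_filter_add_card_filter_not (s := .univ) fun i : Fin K => (i : ℕ) < m
    rw [Fin.card_filter_val_lt, Finset.card_univ, Fintype.card_fin, min_eq_right hm] at split
    convert Nat.eq_sub_of_add_eq' split using 4 with i
    simp [Fin.ext_iff, Fin.clamp]
  simp [fiber_castSucc, fiber_last, Nat.cast_sub hm, sub_div, hK]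

lemma entropy_indicatorVec_of_uniform {l : ℕ} (hl : l ≤ K)
    (hunif : ∀ x, P (Δ ⁻¹' {x}) = (K : ℝ≥0∞)⁻¹) :
    entropy P (fun ω => fun j : Fin l => if (Δ ω : ℕ) = j then (1 : Fin 2) else 0) =
      l * negMulLog (1 / K) + negMulLog (1 - l / K) := by
  calc _ = entropy P (fun ω => (fun (t : Fin (l + 1)) (j : Fin l) =>
          if (t : ℕ) = j then (1 : Fin 2) else 0) (Fin.clamp (Δ ω) l)) := by
        congr! 4 with ω j
        simp [Fin.clamp]
        omega
    _ = _ := by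
      rw [entropy_comp_injective P _ (injective_indicatorVec l),
        entropy_clamp_of_uniform hl hunif]

lemma entropy_indicator_prod_indicatorVec_of_uniform {l : ℕ} (hl : l + 1 ≤ K)
    (hunif : ∀ x, P (Δ ⁻¹' {x}) = (K : ℝ≥0∞)⁻¹) :
    entropy P (fun ω => ((if (Δ ω : ℕ) = l then (1 : Fin 2) else 0),
        fun j : Fin l => if (Δ ω : ℕ) = j then (1 : Fin 2) else 0)) =
      (l + 1 : ℕ) * negMulLog (1 / K) + negMulLog (1 - (l + 1 : ℕ) / K) := by
  calc _ = entropy P (fun ω => (fun t : Fin (l + 2) =>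
          ((if (t : ℕ) = l then (1 : Fin 2) else 0),
            fun j : Fin l => if (t : ℕ) = j then (1 : Fin 2) else 0))
          (Fin.clamp (Δ ω) (l + 1))) := by
        congr! 4 with ω
        · simp [Fin.clamp]
          omega
        · rename_i j
          have := j.isLt
          exact if_congr (by simp [Fin.clamp]; omega) rfl rfl
    _ = _ := by
      rw [entropy_comp_injective P _ (injective_indicator_prod_indicatorVec l),
        entropy_clamp_of_uniform hl hunif]

lemma mutualInfo_indicator_indicatorVec_of_uniform {l : ℕ} (hl : l < K)
    (hunif : ∀ x, P (Δ ⁻¹' {x}) = (K : ℝ≥0∞)⁻¹) :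
    mutualInfo P (fun ω => if (Δ ω : ℕ) = l then (1 : Fin 2) else 0)
        (fun ω => fun j : Fin l => if (Δ ω : ℕ) = j then (1 : Fin 2) else 0) =
      negMulLog (1 - 1 / K) + negMulLog (1 - l / K) - negMulLog (1 - (l + 1) / K) := by
  have hX := entropy_indicator_of_uniform (P := P) (Δ := Δ) (by simpa using hunif)
    fun i => (i : ℕ) = l
  rw [Fin.card_filter_val_eq hl, Fintype.card_fin, Nat.cast_one] at hX
  rw [mutualInfo, hX, entropy_indicatorVec_of_uniform hl.le hunif,
    entropy_indicator_prod_indicatorVec_of_uniform hl hunif]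
  push_cast
  ring

end FinUniform

lemma mul_one_sub_le_negMulLog {x : ℝ} (hx : 0 ≤ x) : x * (1 - x) ≤ negMulLog x := by
  rcases hx.eq_or_lt with rfl | hx
  · simp
  rw [negMulLog, neg_mul, ← mul_neg]
  gcongr
  linarith [log_le_sub_one_of_pos hx]

lemma abs_negMulLog_one_sub_add_sub_le {a b : ℝ} (ha : 0 ≤ a) (hb : 0 ≤ b) (hab : a + b ≤ 1) :
    |negMulLog (1 - a) + negMulLog (1 - b) - negMulLog (1 - (a + b))| ≤ (a + b) ^ 2 := by
  have upper (y : ℝ) (hy : y ≤ 1) : negMulLog (1 - y) ≤ y := by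
    simpa using negMulLog_le_one_sub_self (x := 1 - y) (by linarith)
  have lower (y : ℝ) (hy : y ≤ 1) : y - y ^ 2 ≤ negMulLog (1 - y) := by
    nlinarith [mul_one_sub_le_negMulLog (x := 1 - y) (by linarith)]
  rw [abs_le]
  constructor
  · nlinarith [lower a (by linarith), lower b (by linarith), upper (a + b) hab]
  · nlinarith [upper a (by linarith), upper b (by linarith), lower (a + b) hab]

lemma two_mul_log_two_mul_le_binEntropy {p : ℝ} (hp₀ : 0 ≤ p) (hp : p ≤ 2⁻¹) :
    2 * log 2 * p ≤ binEntropy p := by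
  have := strictConcave_binEntropy.concaveOn.2
    (show (0 : ℝ) ∈ Set.Icc 0 1 by simp) (show (2⁻¹ : ℝ) ∈ Set.Icc 0 1 by norm_num)
    (show 0 ≤ 1 - 2 * p by linarith) (show 0 ≤ 2 * p by linarith) (by ring)
  simp only [smul_eq_mul, binEntropy_zero, binEntropy_two_inv, mul_zero, zero_add] at this
  rw [show 2 * p * 2⁻¹ = p by ring] at this
  linarith

lemma tendsto_negMulLog_one_sub_div_binEntropy (l : ℕ) :
    Tendsto (fun K : ℕ => (negMulLog (1 - 1 / K) + negMulLog (1 - l / K)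
        - negMulLog (1 - (l + 1) / K)) / binEntropy (1 / K)) atTop (nhds 0) := by
  have bound_tendsto : Tendsto (fun K : ℕ => (l + 1) ^ 2 / (2 * log 2) * (1 / (K : ℝ)))
      atTop (nhds 0) := by
    convert tendsto_one_div_atTop_nhds_zero_nat.const_mul ((l + 1) ^ 2 / (2 * log 2))
    rw [mul_zero]
  refine squeeze_zero_norm' ?_ bound_tendsto
  filter_upwards [eventually_ge_atTop (l + 2)] with K hlK
  have hK : (l : ℝ) + 2 ≤ K := by exact_mod_cast hlK
  have hK₀ : (0 : ℝ) < K := by linarith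
  have hq : 1 / (K : ℝ) ≤ 2⁻¹ := by rw [div_le_iff₀ hK₀]; linarith
  have hH : 2 * log 2 * (1 / K) ≤ binEntropy (1 / K) :=
    two_mul_log_two_mul_le_binEntropy (by positivity) hq
  have hI := abs_negMulLog_one_sub_add_sub_le (a := 1 / K) (b := l / K) (by positivity)
    (by positivity) (by rw [← add_div, div_le_one hK₀]; linarith)
  rw [← add_div, add_comm 1] at hI
  have hH₀ : 0 < binEntropy (1 / K) := (by positivity : 0 < 2 * log 2 * (1 / K)).trans_le hH
  rw [norm_div, Real.norm_eq_abs, Real.norm_eq_abs, abs_of_pos hH₀]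
  calc _ ≤ ((l + 1) / K) ^ 2 / (2 * log 2 * (1 / K)) := by gcongr
    _ = _ := by field_simp

/-- **Condition (9) of Theorem 3 for exact private search.** For each alphabet size `K ≥ 1`,
let `Δ` be a uniformly distributed random variable on `Fin K` and, identifying the values
`{1, …, l+1}` (for `l + 1 ≤ K`) with `{0, …, l} ⊆ ℕ`, let `W_j^{(K)}` be the indicator of
`Δ = j`. Then for every fixed `l`,
`I(W_{l+1}^{(K)} ; (W_1^{(K)}, …, W_l^{(K)})) / H₂(1/K) → 0` as `K → ∞`. -/
theorem exact_search_mutualInfo_ratio_tendsto_zero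
    (Ω : ℕ → Type*) [∀ K, MeasurableSpace (Ω K)] (P : ∀ K, Measure (Ω K))
    (hP : ∀ K, 1 ≤ K → IsProbabilityMeasure (P K))
    (Δ : ∀ K, Ω K → Fin K)
    (hunif : ∀ (K : ℕ) (x : Fin K), P K ((Δ K) ⁻¹' {x}) = (K : ENNReal)⁻¹)
    (l : ℕ) :
    Tendsto
      (fun K : ℕ =>
        mutualInfo (P K) (fun ω => if (Δ K ω : ℕ) = l then (1 : Fin 2) else 0)
            (fun ω => fun j : Fin l => if (Δ K ω : ℕ) = (j : ℕ) then (1 : Fin 2) else 0)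
          / Real.binEntropy (1 / K))
      atTop (nhds 0) := by
  refine (tendsto_negMulLog_one_sub_div_binEntropy l).congr' ?_
  filter_upwards [eventually_gt_atTop l] with K hK
  have := hP K (by omega)
  rw [mutualInfo_indicator_indicatorVec_of_uniform hK (hunif K)]
end
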